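/- For each k = 1, …, n−1, the partial derivative of H̃_{k+1} with respect to t_k equals tr(A_k A_{k+1})/(t_k − t_{k+1})². -/

import Mathlib

open Finset

noncomputable section

/-- Extend `t = (t₁, …, tₙ) : Fin n → ℂ` by the fixed points `t_{n+1} = 0` and
`t_{n+2} = 1` (0-based: indices `n` and `n+1` of `Fin (n+2)`). -/
def ext (n : ℕ) (t : Fin n → ℂ) (j : Fin (n + 2)) : ℂ :=
  if h : (j : ℕ) < n then t ⟨j, h⟩ else if (j : ℕ) = n then 0 else 1

/-- Inclusion of indices `1, …, n` into `1, …, n+2` (0-based). -/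
def inc (n : ℕ) : Fin n → Fin (n + 2) := Fin.castLE (by omega)

/-- The partial derivative `∂f/∂t_i` of a scalar function on `ℂⁿ`. -/
def pderiv (n : ℕ) (i : Fin n) (f : (Fin n → ℂ) → ℂ) (t : Fin n → ℂ) : ℂ :=
  fderiv ℂ f t (Pi.single i 1)

/-- `ρ = −(θ₁ + ⋯ + θ_{n+3})/2`. -/
def rho (n : ℕ) (θ : Fin (n + 3) → ℂ) : ℂ := -(∑ j, θ j) / 2

/-- The constants `C_{ij} = −θ_iθ_j/2 + (θ_i² + θ_j²)/(2(n+1))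
− (Σ_k θ_k²)/(2(n+1)(n+2))`. -/
def Cc (n : ℕ) (θ : Fin (n + 3) → ℂ) (i j : Fin (n + 2)) : ℂ :=
  -(θ (Fin.castSucc i) * θ (Fin.castSucc j)) / 2
    + (θ (Fin.castSucc i) ^ 2 + θ (Fin.castSucc j) ^ 2) / (2 * ((n : ℂ) + 1))
    - (∑ k, θ k ^ 2) / (2 * ((n : ℂ) + 1) * ((n : ℂ) + 2))

/-- `H̃_i = Σ_{1 ≤ j ≤ n+2, j ≠ i} tr(A_i A_j)/(t_i − t_j)`. -/
def Htil (n : ℕ) (A : Fin (n + 2) → (Fin n → ℂ) → Matrix (Fin 2) (Fin 2) ℂ)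
    (i : Fin n) (t : Fin n → ℂ) : ℂ :=
  ∑ j ∈ Finset.univ.filter (fun j => j ≠ inc n i),
    (A (inc n i) t * A j t).trace / (t i - ext n t j)

/-!
Differentiate `H̃_m` termwise by the quotient and product rules and substitute the Schlesinger
equations for `∂A_j/∂t_i`. Put `c_j = tr([A_i, A_m] A_j)`; invariance of the trace form,
`tr(Y [Z, X]) = tr([X, Y] Z)`, turns every commutator term into `± c_j` over differences of the
poles, with `c_i = c_m = 0`. For `j ≠ i, m` the contributions of `∂A_m` and `∂A_j` combine by
partial fractions into `c_j / ((t_i - t_m)(t_i - t_j))`, and these cancel exactly against the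
contribution of `∂A_i`. What survives is the derivative of the denominator `t_m - t_i` of the
`j = i` term, i.e. `tr(A_i A_m) / (t_i - t_m)²`.
-/

namespace Matrix

theorem trace_mul_eq_sum_sum {m n R : Type*} [Fintype m] [Fintype n]
    [NonUnitalNonAssocSemiring R] (A : Matrix m n R) (B : Matrix n m R) :
    (A * B).trace = ∑ i, ∑ j, A i j * B j i := by
  simp [trace, mul_apply]

variable {ι R : Type*} [Fintype ι] [CommRing R]

theorem trace_mul_commutator_eq_trace_commutator_mul (X Y Z : Matrix ι ι R) :
    (Y * (Z * X - X * Z)).trace = ((X * Y - Y * X) * Z).trace := by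
  rw [Matrix.mul_sub, Matrix.sub_mul, trace_sub, trace_sub, trace_mul_cycle' Y Z X,
    Matrix.mul_assoc, Matrix.mul_assoc]

theorem trace_commutator_mul_left (X Y : Matrix ι ι R) : ((X * Y - Y * X) * X).trace = 0 := by
  simpa using (trace_mul_commutator_eq_trace_commutator_mul X Y X).symm

theorem trace_commutator_mul_right (X Y : Matrix ι ι R) : ((X * Y - Y * X) * Y).trace = 0 := by
  rw [← neg_sub, Matrix.neg_mul, trace_neg, trace_commutator_mul_left, neg_zero]

end Matrix

section Schlesinger

variable {ι κ K : Type*} [Fintype ι] [Fintype κ] [DecidableEq κ] [Field K]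

/-- The value of `∂A_j/∂t_i` prescribed by the Schlesinger equations with poles `x`. -/
def schlesingerDeriv (x : κ → K) (A : κ → Matrix ι ι K) (i j : κ) : Matrix ι ι K :=
  if j = i then ∑ l ∈ univ.filter (· ≠ i), (x i - x l)⁻¹ • (A l * A i - A i * A l)
  else (x i - x j)⁻¹ • (A i * A j - A j * A i)

theorem sum_trace_schlesingerDeriv_div {x : κ → K} (hx : Function.Injective x)
    (A : κ → Matrix ι ι K) {i m : κ} (him : i ≠ m) :
    ∑ j ∈ univ.filter (· ≠ m),
        (((schlesingerDeriv x A i m * A j).trace + (A m * schlesingerDeriv x A i j).trace)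
            * (x m - x j) + (A m * A j).trace * (if j = i then 1 else 0)) / (x m - x j) ^ 2
      = (A i * A m).trace / (x i - x m) ^ 2 := by
  set c : κ → K := fun j => ((A i * A m - A m * A i) * A j).trace
  have hsub : ∀ {j k}, j ≠ k → x j - x k ≠ 0 := fun h => sub_ne_zero.2 (hx.ne h)
  have hDm : ∀ j, (schlesingerDeriv x A i m * A j).trace = (x i - x m)⁻¹ * c j := by
    intro j
    rw [schlesingerDeriv, if_neg him.symm, Matrix.smul_mul, Matrix.trace_smul, smul_eq_mul]
  have hDj : ∀ j ≠ i, (A m * schlesingerDeriv x A i j).trace = -((x i - x j)⁻¹ * c j) := by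
    intro j hj
    rw [schlesingerDeriv, if_neg hj, Matrix.mul_smul, Matrix.trace_smul, smul_eq_mul,
      ← neg_sub (A j * A i), Matrix.mul_neg, Matrix.trace_neg,
      Matrix.trace_mul_commutator_eq_trace_commutator_mul, mul_neg]
  set S := (univ.filter (· ≠ m)).erase i
  have hDi : (A m * schlesingerDeriv x A i i).trace = ∑ j ∈ S, (x i - x j)⁻¹ * c j := by
    have hm : m ∈ univ.filter (· ≠ i) := by simp [him.symm]
    have hS : (univ.filter (· ≠ i)).erase m = S := by
      ext j; simp only [S, mem_erase, mem_filter, mem_univ, true_and]; tauto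
    rw [schlesingerDeriv, if_pos rfl, ← add_sum_erase _ _ hm, hS, Matrix.mul_add, Matrix.mul_sum,
      Matrix.trace_add, Matrix.trace_sum]
    simp only [Matrix.mul_smul, Matrix.trace_smul, smul_eq_mul,
      Matrix.trace_mul_commutator_eq_trace_commutator_mul]
    rw [Matrix.trace_commutator_mul_right, mul_zero, zero_add]
  have hi : i ∈ univ.filter (· ≠ m) := by simp [him]
  have hci : c i = 0 := Matrix.trace_commutator_mul_left _ _
  calc _ = ((∑ j ∈ S, (x i - x j)⁻¹ * c j) * (x m - x i) + (A m * A i).trace) / (x m - x i) ^ 2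
          + ∑ j ∈ S, (x i - x j)⁻¹ * c j / (x i - x m) := by
        rw [← add_sum_erase _ _ hi, hDm, hDi, hci, if_pos rfl]
        congr 1
        · ring
        · refine sum_congr rfl fun j hj => ?_
          obtain ⟨hji, hjm⟩ : j ≠ i ∧ j ≠ m := by simpa [S] using hj
          rw [hDm, hDj j hji, if_neg hji]
          field_simp [hsub hji.symm, hsub hjm.symm, hsub him]
          ring
    _ = _ := by
        rw [← sum_div, Matrix.trace_mul_comm (A m)]
        generalize ∑ j ∈ S, (x i - x j)⁻¹ * c j = s
        field_simp [hsub him, hsub him.symm]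
        ring

end Schlesinger

section FDeriv

variable {𝕜 E : Type*} [NontriviallyNormedField 𝕜] [NormedAddCommGroup E] [NormedSpace 𝕜 E]
  {x : E}

theorem HasFDerivAt.fun_div {f g : E → 𝕜} {f' g' : E →L[𝕜] 𝕜} (hf : HasFDerivAt f f' x)
    (hg : HasFDerivAt g g' x) (hx : g x ≠ 0) :
    HasFDerivAt (fun s => f s / g s) ((g x ^ 2)⁻¹ • (g x • f' - f x • g')) x := by
  simp only [div_eq_mul_inv]
  refine (hf.fun_mul ((hasFDerivAt_inv hx).comp x hg)).congr_fderiv ?_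
  ext v
  simp
  field_simp
  ring

variable {m n : Type*} [Fintype m] [Fintype n] {F : E → Matrix m n 𝕜} {G : E → Matrix n m 𝕜}

theorem differentiableAt_trace_mul (hF : ∀ p q, DifferentiableAt 𝕜 (fun s => F s p q) x)
    (hG : ∀ q p, DifferentiableAt 𝕜 (fun s => G s q p) x) :
    DifferentiableAt 𝕜 (fun s => (F s * G s).trace) x := by
  simp only [Matrix.trace_mul_eq_sum_sum]
  fun_prop

theorem fderiv_trace_mul_apply (hF : ∀ p q, DifferentiableAt 𝕜 (fun s => F s p q) x)
    (hG : ∀ q p, DifferentiableAt 𝕜 (fun s => G s q p) x) (v : E) :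
    fderiv 𝕜 (fun s => (F s * G s).trace) x v
      = ((Matrix.of fun p q => fderiv 𝕜 (fun s => F s p q) x v) * G x
          + F x * Matrix.of fun q p => fderiv 𝕜 (fun s => G s q p) x v).trace := by
  simp only [Matrix.trace_mul_eq_sum_sum]
  rw [fderiv_fun_sum fun p _ => DifferentiableAt.fun_sum fun q _ =>
    (hF p q).fun_mul (hG q p)]
  simp [fderiv_fun_sum fun q _ => (hF _ q).fun_mul (hG q _), fderiv_fun_mul (hF _ _) (hG _ _),
    Matrix.trace_mul_eq_sum_sum, Finset.sum_add_distrib, mul_comm, add_comm]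

end FDeriv

theorem ext_inc (n : ℕ) (t : Fin n → ℂ) (i : Fin n) : ext n t (inc n i) = t i := by
  simp [_root_.ext, inc]

theorem differentiableAt_ext (n : ℕ) (t : Fin n → ℂ) (j : Fin (n + 2)) :
    DifferentiableAt ℂ (fun s => ext n s j) t := by
  unfold _root_.ext
  split_ifs <;> fun_prop

theorem fderiv_ext_apply_single (n : ℕ) (t : Fin n → ℂ) (j : Fin (n + 2)) (i : Fin n) :
    fderiv ℂ (fun s => ext n s j) t (Pi.single i 1) = if j = inc n i then 1 else 0 := by
  unfold _root_.ext
  split_ifs with h h' h''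
  all_goals simp [(hasFDerivAt_apply _ t).fderiv, Pi.single_apply, Fin.ext_iff, inc] at * <;> omega

def pderivMatrix {ι ι' : Type*} (n : ℕ) (i : Fin n) (F : (Fin n → ℂ) → Matrix ι ι' ℂ)
    (t : Fin n → ℂ) : Matrix ι ι' ℂ :=
  Matrix.of fun p q => pderiv n i (fun s => F s p q) t

theorem pderiv_Htil_eq_sum {n : ℕ} {A : Fin (n + 2) → (Fin n → ℂ) → Matrix (Fin 2) (Fin 2) ℂ}
    {t : Fin n → ℂ} {i m : Fin n} (him : i ≠ m)
    (hA : ∀ j p q, DifferentiableAt ℂ (fun s => A j s p q) t)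
    (hden : ∀ j ≠ inc n m, ext n t (inc n m) - ext n t j ≠ 0) :
    pderiv n i (Htil n A m) t = ∑ j ∈ univ.filter (· ≠ inc n m),
      (((pderivMatrix n i (A (inc n m)) t * A j t).trace
          + (A (inc n m) t * pderivMatrix n i (A j) t).trace)
          * (ext n t (inc n m) - ext n t j)
        + (A (inc n m) t * A j t).trace * (if j = inc n i then 1 else 0))
        / (ext n t (inc n m) - ext n t j) ^ 2 := by
  have hterm : ∀ j ∈ univ.filter (· ≠ inc n m), HasFDerivAt
      (fun s => (A (inc n m) s * A j s).trace / (s m - ext n s j)) _ t :=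
    fun j hj => (differentiableAt_trace_mul (hA _) (hA _)).hasFDerivAt.fun_div
      ((hasFDerivAt_apply m t).sub (differentiableAt_ext n t j).hasFDerivAt)
      (by rw [← ext_inc n t m]; exact hden j (by simpa using hj))
  have hH : HasFDerivAt (Htil n A m) _ t := HasFDerivAt.fun_sum hterm
  rw [pderiv, hH.fderiv, _root_.sum_apply]
  refine sum_congr rfl fun j hj => ?_
  simp only [smul_apply, sub_apply, ContinuousLinearMap.proj_apply, smul_eq_mul,
    fderiv_trace_mul_apply (hA _) (hA _), fderiv_ext_apply_single, ext_inc,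
    Pi.single_eq_of_ne him.symm, Matrix.trace_add]
  rw [div_eq_inv_mul]
  unfold pderivMatrix pderiv
  ring

theorem pderivMatrix_eq_schlesingerDeriv {n : ℕ}
    {A : Fin (n + 2) → (Fin n → ℂ) → Matrix (Fin 2) (Fin 2) ℂ} {t : Fin n → ℂ} {i : Fin n}
    (hSch1 : ∀ j : Fin (n + 2), j ≠ inc n i → ∀ k l : Fin 2,
      pderiv n i (fun s => A j s k l) t
        = ((t i - ext n t j)⁻¹ • (A (inc n i) t * A j t - A j t * A (inc n i) t)) k l)
    (hSch2 : ∀ k l : Fin 2, pderiv n i (fun s => A (inc n i) s k l) t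
        = ∑ j ∈ univ.filter (fun j => j ≠ inc n i),
            ((t i - ext n t j)⁻¹ • (A j t * A (inc n i) t - A (inc n i) t * A j t)) k l)
    (j : Fin (n + 2)) :
    pderivMatrix n i (A j) t = schlesingerDeriv (ext n t) (fun j => A j t) (inc n i) j := by
  ext k l
  by_cases hj : j = inc n i
  · subst hj
    simp [pderivMatrix, schlesingerDeriv, hSch2, ext_inc, Matrix.sum_apply]
  · simp [pderivMatrix, schlesingerDeriv, hSch1 j hj, ext_inc, hj]

theorem pderiv_Htil_of_ne {n : ℕ} {A : Fin (n + 2) → (Fin n → ℂ) → Matrix (Fin 2) (Fin 2) ℂ}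
    {t : Fin n → ℂ} (hinj : Function.Injective (ext n t))
    (hA : ∀ j p q, DifferentiableAt ℂ (fun s => A j s p q) t) {i m : Fin n}
    (hD : ∀ j, pderivMatrix n i (A j) t
      = schlesingerDeriv (ext n t) (fun j => A j t) (inc n i) j)
    (him : i ≠ m) :
    pderiv n i (Htil n A m) t = (A (inc n i) t * A (inc n m) t).trace / (t i - t m) ^ 2 := by
  rw [pderiv_Htil_eq_sum him hA fun j hj => sub_ne_zero.2 (hinj.ne hj.symm), ← ext_inc n t i,
    ← ext_inc n t m]
  simp only [hD]
  exact sum_trace_schlesingerDeriv_div hinj _ ((Fin.castLE_injective _).ne him)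

theorem pderiv_Htil_succ_general
    (n : ℕ)
    (U : Set (Fin n → ℂ)) (hU : IsOpen U)
    (A : Fin (n + 2) → (Fin n → ℂ) → Matrix (Fin 2) (Fin 2) ℂ)
    (hdist : ∀ t ∈ U, ∀ j k : Fin (n + 2), j ≠ k → ext n t j ≠ ext n t k)
    (hHol : ∀ (j : Fin (n + 2)) (k l : Fin 2),
      DifferentiableOn ℂ (fun s => A j s k l) U)
    (hSch1 : ∀ t ∈ U, ∀ (i : Fin n) (j : Fin (n + 2)), j ≠ inc n i →
      ∀ (k l : Fin 2),
        pderiv n i (fun s => A j s k l) t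
          = ((t i - ext n t j)⁻¹ •
              (A (inc n i) t * A j t - A j t * A (inc n i) t)) k l)
    (hSch2 : ∀ t ∈ U, ∀ (i : Fin n) (k l : Fin 2),
      pderiv n i (fun s => A (inc n i) s k l) t
        = ∑ j ∈ Finset.univ.filter (fun j => j ≠ inc n i),
            ((t i - ext n t j)⁻¹ •
              (A j t * A (inc n i) t - A (inc n i) t * A j t)) k l)
    :
    ∀ t ∈ U, ∀ (k : Fin n) (h : (k : ℕ) + 1 < n),
      pderiv n k (fun s => Htil n A ⟨(k : ℕ) + 1, h⟩ s) t
        = (A (inc n k) t * A (inc n ⟨(k : ℕ) + 1, h⟩) t).trace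
            / (t k - t ⟨(k : ℕ) + 1, h⟩) ^ 2 := by
  intro t ht k hk
  have hinj : Function.Injective (ext n t) := fun j l h =>
    Not.imp_symm (hdist t ht j l) (not_not.2 h)
  exact pderiv_Htil_of_ne hinj (fun j p q => (hHol j p q).differentiableAt (hU.mem_nhds ht))
    (pderivMatrix_eq_schlesingerDeriv (hSch1 t ht k) (hSch2 t ht k)) (by simp [Fin.ext_iff])

/-- For each `k = 1, …, n−1`, `∂H̃_{k+1}/∂t_k = tr(A_k A_{k+1})/(t_k − t_{k+1})²`. -/
theorem pderiv_Htil_succ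
    (n : ℕ) (hn : 2 ≤ n) (θ : Fin (n + 3) → ℂ)
    (U : Set (Fin n → ℂ)) (hU : IsOpen U)
    (A : Fin (n + 2) → (Fin n → ℂ) → Matrix (Fin 2) (Fin 2) ℂ)
    (hdist : ∀ t ∈ U, ∀ j k : Fin (n + 2), j ≠ k → ext n t j ≠ ext n t k)
    (hHol : ∀ (j : Fin (n + 2)) (k l : Fin 2),
      DifferentiableOn ℂ (fun s => A j s k l) U)
    (hdet : ∀ t ∈ U, ∀ j, (A j t).det = 0)
    (htr : ∀ t ∈ U, ∀ j : Fin (n + 2), (A j t).trace = θ (Fin.castSucc j))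
    (hsum : ∀ t ∈ U, ∑ j, A j t =
      -Matrix.diagonal ![rho n θ, rho n θ + θ (Fin.last (n + 2))])
    (hSch1 : ∀ t ∈ U, ∀ (i : Fin n) (j : Fin (n + 2)), j ≠ inc n i →
      ∀ (k l : Fin 2),
        pderiv n i (fun s => A j s k l) t
          = ((t i - ext n t j)⁻¹ •
              (A (inc n i) t * A j t - A j t * A (inc n i) t)) k l)
    (hSch2 : ∀ t ∈ U, ∀ (i : Fin n) (k l : Fin 2),
      pderiv n i (fun s => A (inc n i) s k l) t
        = ∑ j ∈ Finset.univ.filter (fun j => j ≠ inc n i),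
            ((t i - ext n t j)⁻¹ •
              (A j t * A (inc n i) t - A (inc n i) t * A j t)) k l)
    :
    ∀ t ∈ U, ∀ (k : Fin n) (h : (k : ℕ) + 1 < n),
      pderiv n k (fun s => Htil n A ⟨(k : ℕ) + 1, h⟩ s) t
        = (A (inc n k) t * A (inc n ⟨(k : ℕ) + 1, h⟩) t).trace
            / (t k - t ⟨(k : ℕ) + 1, h⟩) ^ 2 :=
  pderiv_Htil_succ_general n U hU A hdist hHol hSch1 hSch2
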